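/- Let S be a topological semigroup acting non-expansively on a metric space (X,d) such that the action has a fixed point z∈X. Then there exists a real normed space V, equipped with a linear non-expansive action of S, and an equivariant isometric embedding of (X,d) into V sending z to 0. -/

import Mathlib

open Bornology Metric Set

universe u v

/-- A non-expansive (jointly continuous) action of a topological semigroup `S`
on a metric space `X`. -/
structure NonexpAction (S : Type*) (X : Type*) [Semigroup S] [TopologicalSpace S]
    [MetricSpace X] where
  act : S → X → X
  mul_act : ∀ s t x, act (s * t) x = act s (act t x)
  nonexp : ∀ s x y, dist (act s x) (act s y) ≤ dist x y
  cont : Continuous fun p : S × X => act p.1 p.2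

/-- A linear non-expansive (jointly continuous) action of a topological semigroup `S`
on a real normed space `V`. -/
structure LinNonexpAction (S : Type*) (V : Type*) [Semigroup S] [TopologicalSpace S]
    [NormedAddCommGroup V] [NormedSpace ℝ V] where
  act : S → V → V
  mul_act : ∀ s t x, act (s * t) x = act s (act t x)
  linear : ∀ s, IsLinearMap ℝ (act s)
  nonexp : ∀ s x, ‖act s x‖ ≤ ‖x‖
  cont : Continuous fun p : S × V => act p.1 p.2

/-!
Adjoin a unit to `S` and send `x` to the function `f x : (t, y) ↦ d(t·x, y) - d(t·z, y)` on
`S¹ × X`; it is bounded by `d(x, z)` because `t` is non-expansive, and its coordinates with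
`t = 1` make `f` an isometry, as for the Kuratowski embedding. Right translation
`g ↦ g(· s, ·)` is a linear contraction, and it intertwines the two actions because `t·z = z`.
This representation need not be continuous in `s`, so we restrict it to the vectors with
continuous orbit map: they form an invariant subspace containing the image of `X`, on which
the action is jointly continuous because the operators are uniformly Lipschitz.
-/

open BoundedContinuousFunction

section ContinuousVectors

variable {𝕜 S W : Type*} [NormedField 𝕜] [TopologicalSpace S] [Mul S]
  [SeminormedAddCommGroup W] [NormedSpace 𝕜 W]

def continuousVectors (T : S →ₙ* (W →L[𝕜] W)) : Submodule 𝕜 W where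
  carrier := {v | Continuous fun s => T s v}
  add_mem' {v w} hv hw := by
    simp only [mem_ofPred_eq, map_add]
    exact hv.add hw
  zero_mem' := by
    simp only [mem_ofPred_eq, map_zero]
    exact continuous_const
  smul_mem' c v hv := by
    simp only [mem_ofPred_eq, map_smul]
    exact hv.const_smul c

variable (T : S →ₙ* (W →L[𝕜] W))

theorem mem_continuousVectors {v : W} :
    v ∈ continuousVectors T ↔ Continuous fun s => T s v := Iff.rfl

theorem mem_continuousVectors_of_equivariant {X : Type*} [TopologicalSpace X]
    {act : S → X → X} (hact : ∀ x, Continuous fun s => act s x) {f : X → W} (hf : Continuous f)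
    (hfT : ∀ s x, T s (f x) = f (act s x)) (x : X) : f x ∈ continuousVectors T := by
  simp only [mem_continuousVectors, hfT]
  exact hf.comp (hact x)

theorem apply_mem_continuousVectors [ContinuousMul S] (s : S) {v : W}
    (hv : v ∈ continuousVectors T) : T s v ∈ continuousVectors T := by
  simp only [mem_continuousVectors, ← mul_apply_eq_comp, ← map_mul]
  exact hv.comp (continuous_mul_const s)

theorem continuous_apply_continuousVectors (hT : ∀ s v, ‖T s v‖ ≤ ‖v‖) :
    Continuous fun p : S × continuousVectors T => T p.1 p.2 := by
  refine continuous_iff_continuousAt.2 fun ⟨s₀, v₀⟩ => ?_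
  have hbound : ∀ p : S × continuousVectors T,
      dist (T p.1 p.2) (T s₀ v₀) ≤ dist p.2 v₀ + dist (T p.1 v₀) (T s₀ v₀) := fun ⟨s, v⟩ =>
    calc dist (T s v) (T s₀ v₀) ≤ dist (T s v) (T s v₀) + dist (T s v₀) (T s₀ v₀) :=
          dist_triangle _ _ _
      _ ≤ dist v v₀ + dist (T s v₀) (T s₀ v₀) := by
          gcongr
          rw [dist_eq_norm, dist_eq_norm, ← map_sub]
          exact hT s _
  have hcont : Continuous fun p : S × continuousVectors T =>
      dist p.2 v₀ + dist (T p.1 v₀) (T s₀ v₀) :=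
    (continuous_snd.dist continuous_const).add
      ((((mem_continuousVectors T).1 v₀.2).comp continuous_fst).dist continuous_const)
  rw [ContinuousAt, tendsto_iff_dist_tendsto_zero]
  exact squeeze_zero (fun _ => dist_nonneg) hbound (by simpa using hcont.tendsto (s₀, v₀))

end ContinuousVectors

def LinNonexpAction.ofContinuousVectors {S W : Type*} [Semigroup S] [TopologicalSpace S]
    [ContinuousMul S] [NormedAddCommGroup W] [NormedSpace ℝ W] (T : S →ₙ* (W →L[ℝ] W))
    (hT : ∀ s v, ‖T s v‖ ≤ ‖v‖) : LinNonexpAction S (continuousVectors T) where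
  act s v := ⟨T s v, apply_mem_continuousVectors T s v.2⟩
  mul_act s t v := Subtype.ext (DFunLike.congr_fun (map_mul T s t) v.1)
  linear s := ⟨fun v w => Subtype.ext (map_add (T s) v.1 w.1),
    fun c v => Subtype.ext (map_smul (T s) c v.1)⟩
  nonexp s v := hT s v
  cont := continuous_induced_rng.2 (continuous_apply_continuousVectors T hT)

section RightTranslation

open WithTopology

variable {M Y : Type*} [Monoid M]

noncomputable def rightTranslation :
    M →* (WithDiscreteTopology (M × Y) →ᵇ ℝ) →L[ℝ] WithDiscreteTopology (M × Y) →ᵇ ℝ where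
  toFun m := compContinuousCLM ℝ ℝ
    ⟨fun q => toTopology ⊥ (q.ofTopology.1 * m, q.ofTopology.2), continuous_of_discreteTopology⟩
  map_one' := by ext; simp
  map_mul' m n := by ext; simp [mul_assoc]

theorem rightTranslation_apply (m : M) (g : WithDiscreteTopology (M × Y) →ᵇ ℝ) (t : M) (y : Y) :
    rightTranslation m g (toTopology ⊥ (t, y)) = g (toTopology ⊥ (t * m, y)) := rfl

theorem norm_rightTranslation_apply_le (m : M) (g : WithDiscreteTopology (M × Y) →ᵇ ℝ) :
    ‖rightTranslation m g‖ ≤ ‖g‖ :=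
  norm_compContinuous_le g _

end RightTranslation

namespace NonexpAction

open WithTopology

variable {S X : Type*} [Semigroup S] [TopologicalSpace S] [MetricSpace X] (π : NonexpAction S X)

def toEnd : S →ₙ* Function.End X where
  toFun := π.act
  map_mul' s t := funext (π.mul_act s t)

def extend : WithOne S →* Function.End X := WithOne.lift π.toEnd

@[simp] theorem extend_coe (s : S) (x : X) : π.extend s x = π.act s x := rfl
@[simp] theorem extend_one (x : X) : π.extend 1 x = x := rfl

theorem extend_mul (m n : WithOne S) (x : X) :
    π.extend (m * n) x = π.extend m (π.extend n x) := by
  rw [map_mul]; rfl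

theorem dist_extend_le (m : WithOne S) (x y : X) :
    dist (π.extend m x) (π.extend m y) ≤ dist x y := by
  induction m using WithOne.recOneCoe with
  | one => simp
  | coe s => exact π.nonexp s x y

def embedding (z x : X) : WithDiscreteTopology (WithOne S × X) →ᵇ ℝ :=
  ofNormedAddCommGroupDiscrete
    (fun q => dist (π.extend q.ofTopology.1 x) q.ofTopology.2 -
      dist (π.extend q.ofTopology.1 z) q.ofTopology.2)
    (dist x z) fun _ => (abs_dist_sub_le _ _ _).trans (π.dist_extend_le _ _ _)

theorem embedding_apply (z x : X) (t : WithOne S) (y : X) :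
    π.embedding z x (toTopology ⊥ (t, y)) = dist (π.extend t x) y - dist (π.extend t z) y := rfl

theorem embedding_self (z : X) : π.embedding z z = 0 := by
  ext ⟨⟨t, y⟩⟩
  exact sub_self _

theorem isometry_embedding (z : X) : Isometry (π.embedding z) := by
  refine Isometry.of_dist_eq fun x x' => le_antisymm ?_ ?_
  · refine (dist_le dist_nonneg).2 fun q => ?_
    obtain ⟨⟨t, y⟩⟩ := q
    rw [Real.dist_eq, embedding_apply, embedding_apply, sub_sub_sub_cancel_right]
    exact (abs_dist_sub_le _ _ _).trans (π.dist_extend_le t x x')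
  · simpa [embedding_apply] using
      dist_coe_le_dist (f := π.embedding z x) (g := π.embedding z x') (toTopology ⊥ (1, x'))

theorem rightTranslation_embedding {z : X} (hz : ∀ s, π.act s z = z) (s : S) (x : X) :
    rightTranslation (s : WithOne S) (π.embedding z x) = π.embedding z (π.act s x) := by
  ext ⟨⟨t, y⟩⟩
  simp only [rightTranslation_apply, embedding_apply, extend_mul, extend_coe, hz]

end NonexpAction

/-- A non-expansive semigroup action on a metric space possessing a fixed point `z` embeds
equivariantly and isometrically into a real normed space carrying a linear non-expansive
`S`-action, with `z` sent to `0`. -/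
theorem stmt_16 {S : Type u} {X : Type v} [Semigroup S] [TopologicalSpace S] [ContinuousMul S]
    [MetricSpace X] (π : NonexpAction S X) (z : X) (hz : ∀ s, π.act s z = z) :
    ∃ (V : Type (max u v)) (_ : NormedAddCommGroup V) (_ : NormedSpace ℝ V)
      (σ : LinNonexpAction S V) (f : X → V),
      Isometry f ∧ (∀ s x, f (π.act s x) = σ.act s (f x)) ∧ f z = 0 := by
  let T := (rightTranslation (M := WithOne S) (Y := X)).toMulHom.comp WithOne.coeMulHom
  have hequiv : ∀ s x, T s (π.embedding z x) = π.embedding z (π.act s x) :=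
    π.rightTranslation_embedding hz
  have hmem : ∀ x, π.embedding z x ∈ continuousVectors T :=
    mem_continuousVectors_of_equivariant T
      (fun x => π.cont.comp (continuous_id.prodMk continuous_const))
      (π.isometry_embedding z).continuous hequiv
  refine ⟨continuousVectors T, inferInstance, inferInstance,
    .ofContinuousVectors T fun s => norm_rightTranslation_apply_le _,
    fun x => ⟨π.embedding z x, hmem x⟩, ?_, fun s x => Subtype.ext (hequiv s x).symm,
    Subtype.ext (π.embedding_self z)⟩
  exact Isometry.of_dist_eq fun x y => (π.isometry_embedding z).dist_eq x y
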